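/- arXiv:2402.05835 — 2 statements merged into one kernel-verified Lean document; each statement's English description precedes it below -/
import Mathlib

section
/- The bias of the estimator M̂_k^B = C(n,k)·Σ_{i=1}^{n-k} (-1)^{i-1} Φ_{k+i}/C(n,k+i) satisfies |E[M̂_k^B] - E[M_k]| = C(n,k)·Σ_x p_x^{n+1} ≤ n^k · Σ_x p_x^{n+1}. -/
/-!
Under the product measure every expectation is the finite sum `∑ ω, (∏ j, p (ω j)) * f ω`.
The number of occurrences `N_x` of a symbol `x` has generating function `(p x * t + 1 - p x) ^ n`,
so `E[Φ_m] = ∑ x, C(n,m) p_x^m (1-p_x)^(n-m)` and `E[M_k] = ∑ x, p_x C(n,k) p_x^k (1-p_x)^(n-k)`.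
The factors `C(n,k+i)` of the estimator cancel those of `E[Φ_(k+i)]`, and for each symbol the
alternating sum `∑_{i=1}^m (-1)^(i-1) a^i (1-a)^(m-i)` telescopes to `a (1-a)^m - (-1)^m a^(m+1)`.
Its first term is the contribution of `x` to `E[M_k]`, so only `±C(n,k) p_x^(n+1)` survives.
-/

open Finset MeasureTheory

theorem Polynomial.coeff_C_mul_X_add_C_pow {R : Type*} [CommSemiring R] (a b : R) (n m : ℕ) :
    ((C a * X + C b) ^ n).coeff m = n.choose m * a ^ m * b ^ (n - m) := by
  simp only [add_pow, finsetSum_coeff, mul_pow, ← C_pow, ← C_eq_natCast, mul_assoc, ← C_mul,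
    coeff_C_mul, coeff_X_pow_mul', coeff_C]
  rw [sum_eq_single m]
  · simp only [le_refl, if_true, tsub_self]
    ring
  · intro i _ hi
    split_ifs <;> first | omega | exact mul_zero _
  · simp +contextual [Nat.choose_eq_zero_of_lt]

theorem integral_pi_eq_sum_prod_measureReal {ι : Type*} [Fintype ι] [DecidableEq ι]
    {α : ι → Type*} [∀ i, Fintype (α i)] [∀ i, MeasurableSpace (α i)]
    [∀ i, MeasurableSingletonClass (α i)] (μ : ∀ i, Measure (α i)) [∀ i, IsFiniteMeasure (μ i)]
    (f : (∀ i, α i) → ℝ) :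
    ∫ ω, f ω ∂Measure.pi μ = ∑ ω, (∏ i, (μ i).real {ω i}) * f ω := by
  rw [integral_fintype .of_finite]
  simp [measureReal_def, ENNReal.toReal_prod]

theorem sum_Icc_neg_one_pow_mul_pow_mul_one_sub_pow {R : Type*} [CommRing R] (a : R) (m : ℕ) :
    ∑ i ∈ Icc 1 m, (-1) ^ (i - 1) * (a ^ i * (1 - a) ^ (m - i)) =
      a * (1 - a) ^ m - (-1) ^ m * a ^ (m + 1) := by
  induction m with
  | zero => simp
  | succ m ih =>
    have shift : ∀ i ∈ Icc 1 m, (-1) ^ (i - 1) * (a ^ i * (1 - a) ^ (m + 1 - i)) =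
        (-1) ^ (i - 1) * (a ^ i * (1 - a) ^ (m - i)) * (1 - a) := fun i hi => by
      rw [show m + 1 - i = m - i + 1 by grind, pow_succ]
      ring
    rw [sum_Icc_succ_top (by omega), sum_congr rfl shift, ← sum_mul, ih]
    simp only [add_tsub_cancel_right, tsub_self, pow_zero]
    ring

theorem estimator_term_sub_missing_mass_term {R : Type*} [CommRing R] (a : R) {n k : ℕ}
    (hk : k ≤ n) :
    n.choose k * ∑ i ∈ Icc 1 (n - k), (-1) ^ (i - 1) * (a ^ (k + i) * (1 - a) ^ (n - (k + i))) -
        a * (n.choose k * a ^ k * (1 - a) ^ (n - k)) =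
      -((-1) ^ (n - k) * (n.choose k * a ^ (n + 1))) := by
  have factor : ∀ i ∈ Icc 1 (n - k), (-1) ^ (i - 1) * (a ^ (k + i) * (1 - a) ^ (n - (k + i))) =
      a ^ k * ((-1) ^ (i - 1) * (a ^ i * (1 - a) ^ (n - k - i))) := fun i _ => by
    rw [pow_add, Nat.sub_add_eq]
    ring
  rw [sum_congr rfl factor, ← mul_sum, sum_Icc_neg_one_pow_mul_pow_mul_one_sub_pow,
    show n + 1 = k + (n - k + 1) by omega, pow_add]
  ring

section Sample

variable {α : Type*} [Fintype α] [DecidableEq α]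

theorem sum_prod_mul_pow_count {R : Type*} [CommSemiring R] (w : α → R) (x : α) (t : R)
    (n : ℕ) :
    ∑ ω : Fin n → α, (∏ j, w (ω j)) * t ^ (∑ j, if ω j = x then 1 else 0 : ℕ) =
      (w x * t + ∑ y ∈ univ.erase x, w y) ^ n := by
  have marked : w x * t + ∑ y ∈ univ.erase x, w y = ∑ y, w y * if y = x then t else 1 := by
    rw [← add_sum_erase _ _ (mem_univ x), if_pos rfl]
    congr 1
    exact sum_congr rfl fun y hy => by rw [if_neg (ne_of_mem_erase hy), mul_one]
  rw [marked, Fintype.sum_pow]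
  refine sum_congr rfl fun ω _ => ?_
  rw [prod_mul_distrib, ← prod_pow_eq_pow_sum]
  congr 1
  exact prod_congr rfl fun j _ => by split_ifs <;> simp

theorem sum_prod_mul_ite_count_eq {R : Type*} [CommSemiring R] (w : α → R) (x : α)
    (n m : ℕ) :
    ∑ ω : Fin n → α, (∏ j, w (ω j)) *
        (if (∑ j, if ω j = x then 1 else 0 : ℕ) = m then 1 else 0) =
      n.choose m * w x ^ m * (∑ y ∈ univ.erase x, w y) ^ (n - m) := by
  have h := congrArg (Polynomial.coeff · m)
    (sum_prod_mul_pow_count (fun y => Polynomial.C (w y)) x Polynomial.X n)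
  simp only [← map_prod, ← map_sum, Polynomial.finsetSum_coeff, Polynomial.coeff_C_mul_X_pow,
    Polynomial.coeff_C_mul_X_add_C_pow] at h
  simpa [eq_comm] using h

theorem sum_prod_mul_sum_ite_count_eq {R : Type*} [CommRing R] {w : α → R}
    (hw : ∑ y, w y = 1) (g : α → R) (n m : ℕ) :
    ∑ ω : Fin n → α, (∏ j, w (ω j)) *
        ∑ x, (if (∑ j, if ω j = x then 1 else 0 : ℕ) = m then g x else 0) =
      ∑ x, g x * (n.choose m * w x ^ m * (1 - w x) ^ (n - m)) := by
  simp_rw [mul_sum]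
  rw [sum_comm]
  refine sum_congr rfl fun x _ => ?_
  simp_rw [← mul_boole _ (g x), mul_left_comm _ (g x), ← mul_sum]
  rw [sum_prod_mul_ite_count_eq, sum_erase_eq_sub (mem_univ x), hw]

theorem sum_prod_mul_estimator_eq {R : Type*} [Field R] [CharZero R] {w : α → R}
    (hw : ∑ y, w y = 1) (n k : ℕ) :
    ∑ ω : Fin n → α, (∏ j, w (ω j)) * ((n.choose k : R) *
        ∑ i ∈ Icc 1 (n - k), (-1) ^ (i - 1) *
          ((∑ x, if (∑ j, if ω j = x then 1 else 0 : ℕ) = k + i then 1 else 0 : R) /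
            (n.choose (k + i) : R))) =
      n.choose k * ∑ x, ∑ i ∈ Icc 1 (n - k),
        (-1) ^ (i - 1) * (w x ^ (k + i) * (1 - w x) ^ (n - (k + i))) := by
  simp_rw [mul_left_comm _ (n.choose k : R)]
  rw [← mul_sum]
  congr 1
  simp_rw [mul_sum]
  rw [sum_comm]
  conv_rhs => rw [sum_comm]
  refine sum_congr rfl fun i hi => ?_
  have hchoose : (n.choose (k + i) : R) ≠ 0 := by
    obtain ⟨h1, h2⟩ := mem_Icc.mp hi
    exact_mod_cast (Nat.choose_pos (by omega)).ne'
  simp_rw [mul_div_assoc', mul_left_comm _ ((-1 : R) ^ _), ← mul_sum, ← sum_div]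
  rw [← mul_sum, sum_prod_mul_sum_ite_count_eq hw (fun _ => 1) n (k + i)]
  simp only [one_mul, mul_assoc, ← mul_sum]
  field_simp

end Sample

/-- The bias of the estimator
`M̂_k^B = C(n,k) * ∑_{i=1}^{n-k} (-1)^(i-1) Φ_(k+i) / C(n,k+i)` satisfies
`|E[M̂_k^B] - E[M_k]| = C(n,k) * ∑ x, p x ^ (n+1) ≤ n^k * ∑ x, p x ^ (n+1)`. -/
theorem minimal_bias_estimator_bias {X : Type*} [Fintype X] [DecidableEq X]
    [MeasurableSpace X] [MeasurableSingletonClass X]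
    (n k : ℕ) (hk : k ≤ n)
    (μX : Measure X) [IsProbabilityMeasure μX]
    (p : X → ℝ) (hp : ∀ x, (μX {x}).toReal = p x) :
    |(∫ ω, ((n.choose k : ℝ) *
          ∑ i ∈ Finset.Icc 1 (n - k),
            (-1 : ℝ) ^ (i - 1) *
              ((∑ x, if (∑ j, if ω j = x then 1 else 0 : ℕ) = k + i then 1 else 0 : ℝ)
                / (n.choose (k + i) : ℝ)))
          ∂(Measure.pi fun _ : Fin n => μX))
      - ∫ ω, (∑ x, if (∑ j, if ω j = x then 1 else 0 : ℕ) = k then p x else 0)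
          ∂(Measure.pi fun _ : Fin n => μX)|
      = (n.choose k : ℝ) * ∑ x, p x ^ (n + 1) ∧
    (n.choose k : ℝ) * ∑ x, p x ^ (n + 1) ≤ (n : ℝ) ^ k * ∑ x, p x ^ (n + 1) := by
  have hp_real : ∀ x, μX.real {x} = p x := hp
  have hp_sum : ∑ x, p x = 1 := by simp [← hp_real]
  have hmoment_nonneg : 0 ≤ ∑ x, p x ^ (n + 1) :=
    sum_nonneg fun x _ => pow_nonneg (hp_real x ▸ measureReal_nonneg) _
  rw [integral_pi_eq_sum_prod_measureReal, integral_pi_eq_sum_prod_measureReal]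
  simp only [hp_real, sum_prod_mul_estimator_eq hp_sum, sum_prod_mul_sum_ite_count_eq hp_sum]
  rw [mul_sum, ← sum_sub_distrib]
  simp only [estimator_term_sub_missing_mass_term _ hk, sum_neg_distrib, ← mul_sum]
  rw [abs_neg, abs_mul, abs_pow, abs_neg, abs_one, one_pow, one_mul,
    abs_of_nonneg (mul_nonneg (Nat.cast_nonneg _) hmoment_nonneg)]
  exact ⟨rfl, by gcongr; exact_mod_cast Nat.choose_le_pow n k⟩
end

section
/- The bias of the Good–Turing estimator M̂_k^G = ((k+1)/n)·Φ_{k+1} equals Σ_x C(n,k)·p_x^{k+2}(1-p_x)^{n-k-1}·(1 - k/(n·p_x)). -/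
open Finset MeasureTheory

open Polynomial in
theorem sum_prod_of_count_eq {α R : Type*} [Fintype α] [DecidableEq α] [CommSemiring R]
    (w : α → R) (x : α) (n m : ℕ) :
    ∑ ω : Fin n → α, (if (∑ j, if ω j = x then 1 else 0 : ℕ) = m then ∏ j, w (ω j) else 0)
      = n.choose m * w x ^ m * (∑ y ∈ univ.erase x, w y) ^ (n - m) := by
  have generating : ∑ ω : Fin n → α, C (∏ j, w (ω j)) * X ^ (∑ j, if ω j = x then 1 else 0 : ℕ)
      = (C (w x) * X + C (∑ y ∈ univ.erase x, w y)) ^ n := by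
    calc _ = ∑ ω : Fin n → α, ∏ j, C (w (ω j)) * X ^ (if ω j = x then 1 else 0 : ℕ) := by
            simp only [prod_mul_distrib, map_prod, prod_pow_eq_pow_sum]
      _ = (∑ y, C (w y) * X ^ (if y = x then 1 else 0 : ℕ)) ^ n := by
            rw [Fintype.sum_pow]
      _ = _ := by
            rw [← add_sum_erase _ _ (mem_univ x), map_sum]
            congr 2
            · simp
            · exact sum_congr rfl fun y hy => by simp [ne_of_mem_erase hy]
  have := congrArg (coeff · m) generating
  simp only [finsetSum_coeff, coeff_C_mul_X_pow, coeff_C_mul_X_add_C_pow] at this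
  simpa [eq_comm] using this

theorem integral_pi_eq_sum {ι α : Type*} [Fintype ι] [DecidableEq ι] [Fintype α]
    [MeasurableSpace α] [MeasurableSingletonClass α] (μ : ι → Measure α)
    [∀ i, IsFiniteMeasure (μ i)] (f : (ι → α) → ℝ) :
    ∫ ω, f ω ∂Measure.pi μ = ∑ ω, (∏ i, (μ i).real {ω i}) * f ω := by
  rw [integral_fintype Integrable.of_finite]
  simp [Measure.real, ENNReal.toReal_prod]

section Sample

variable {α : Type*} [Fintype α] [DecidableEq α] [MeasurableSpace α] [MeasurableSingletonClass α]
  (μ : Measure α) [IsProbabilityMeasure μ]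

theorem sum_erase_measureReal_singleton (x : α) :
    ∑ y ∈ univ.erase x, μ.real {y} = 1 - μ.real {x} := by
  rw [sum_erase_eq_sub (mem_univ x), sum_measureReal_singleton, coe_univ, probReal_univ]

theorem integral_ite_count_eq (n m : ℕ) (x : α) (c : ℝ) :
    ∫ ω, (if (∑ j, if ω j = x then 1 else 0 : ℕ) = m then c else 0)
        ∂(Measure.pi fun _ : Fin n => μ)
      = c * (n.choose m * μ.real {x} ^ m * (1 - μ.real {x}) ^ (n - m)) := by
  rw [integral_pi_eq_sum, ← sum_erase_measureReal_singleton μ x,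
    ← sum_prod_of_count_eq (μ.real {·}), mul_sum]
  exact sum_congr rfl fun ω _ => by split_ifs <;> ring

end Sample

theorem good_turing_bias_term (n k : ℕ) (hk : k < n) (p : ℝ) :
    (k + 1) / n * (n.choose (k + 1) * p ^ (k + 1) * (1 - p) ^ (n - (k + 1)))
      - p * (n.choose k * p ^ k * (1 - p) ^ (n - k))
      = n.choose k * p ^ (k + 2) * (1 - p) ^ (n - k - 1) * (1 - k / (n * p)) := by
  obtain ⟨r, rfl⟩ : ∃ r, n = k + 1 + r := ⟨n - (k + 1), by omega⟩
  have hchoose : ((k + 1 + r).choose (k + 1) : ℝ) * (k + 1) = (k + 1 + r).choose k * (r + 1) := by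
    have := Nat.choose_succ_right_eq (k + 1 + r) k
    rw [show k + 1 + r - k = r + 1 by omega] at this
    exact_mod_cast this
  rcases eq_or_ne p 0 with rfl | hp
  · simp -- both sides vanish, the right one because `k / (n * 0) = 0`
  simp only [show k + 1 + r - (k + 1) = r by omega, show k + 1 + r - k = r + 1 by omega]
  field_simp
  push_cast
  linear_combination p ^ (k + 2) * (1 - p) ^ r * hchoose

theorem good_turing_bias_general {X : Type*} [Fintype X] [DecidableEq X]
    [MeasurableSpace X] [MeasurableSingletonClass X]
    (n k : ℕ) (hk : k < n)
    (μX : Measure X) [IsProbabilityMeasure μX]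
    (p : X → ℝ) (hp : ∀ x, (μX {x}).toReal = p x) :
    (∫ ω, (((k : ℝ) + 1) / (n : ℝ) *
          (∑ x, if (∑ j, if ω j = x then 1 else 0 : ℕ) = k + 1 then 1 else 0 : ℝ))
        ∂(Measure.pi fun _ : Fin n => μX))
      - (∫ ω, (∑ x, if (∑ j, if ω j = x then 1 else 0 : ℕ) = k then p x else 0)
          ∂(Measure.pi fun _ : Fin n => μX))
      = ∑ x, (n.choose k : ℝ) * p x ^ (k + 2) * (1 - p x) ^ (n - k - 1) *
          (1 - (k : ℝ) / ((n : ℝ) * p x)) := by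
  obtain rfl : p = fun x => μX.real {x} := funext fun x => (hp x).symm
  rw [integral_const_mul, integral_finsetSum _ fun _ _ => Integrable.of_finite,
    integral_finsetSum _ fun _ _ => Integrable.of_finite]
  simp only [integral_ite_count_eq, one_mul, mul_sum, ← sum_sub_distrib]
  exact sum_congr rfl fun x _ => good_turing_bias_term n k hk _

/-- The bias of the Good–Turing estimator `M̂_k^G = ((k+1)/n) * Φ_(k+1)` equals
`∑ x, C(n,k) * p x ^ (k+2) * (1 - p x) ^ (n-k-1) * (1 - k/(n * p x))`. -/
theorem good_turing_bias {X : Type*} [Fintype X] [DecidableEq X]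
    [MeasurableSpace X] [MeasurableSingletonClass X]
    (n k : ℕ) (hk1 : 1 ≤ k) (hk : k < n)
    (μX : Measure X) [IsProbabilityMeasure μX]
    (p : X → ℝ) (hp : ∀ x, (μX {x}).toReal = p x)
    (hpos : ∀ x, 0 < p x) :
    (∫ ω, (((k : ℝ) + 1) / (n : ℝ) *
          (∑ x, if (∑ j, if ω j = x then 1 else 0 : ℕ) = k + 1 then 1 else 0 : ℝ))
        ∂(Measure.pi fun _ : Fin n => μX))
      - (∫ ω, (∑ x, if (∑ j, if ω j = x then 1 else 0 : ℕ) = k then p x else 0)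
          ∂(Measure.pi fun _ : Fin n => μX))
      = ∑ x, (n.choose k : ℝ) * p x ^ (k + 2) * (1 - p x) ^ (n - k - 1) *
          (1 - (k : ℝ) / ((n : ℝ) * p x)) :=
  good_turing_bias_general n k hk μX p hp
end
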